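/- With notation as in the scaling fixed point (a = α/(Mb), b = (β/(Mᵀa))^{∘f}, Q = diag(a) M diag(b), f = λ/(λ+ε)), the column marginal satisfies Qᵀ1_N = β^{∘f} ⊙ (Mᵀa)^{∘(1−f)}, i.e., it is the entrywise weighted geometric mean of β and Mᵀa with exponents f and 1−f. -/
import Mathlib

theorem scaling_fixed_point_col_marginal (N K : ℕ)
    (M : Matrix (Fin N) (Fin K) ℝ) (α : Fin N → ℝ) (β : Fin K → ℝ)
    (a : Fin N → ℝ) (b : Fin K → ℝ) (f : ℝ)
    (hM : ∀ i k, 0 < M i k) (hα : ∀ i, 0 < α i) (hβ : ∀ k, 0 < β k)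
    (ha : ∀ i, 0 < a i) (hb : ∀ k, 0 < b k)
    (hf : 0 ≤ f ∧ f < 1)
    (hafix : ∀ i, a i = α i / (∑ k, M i k * b k))
    (hbfix : ∀ k, b k = (β k / (∑ i, M i k * a i)) ^ f) :
    ∀ k, ∑ i, a i * M i k * b k = β k ^ f * (∑ i, M i k * a i) ^ (1 - f) := by
  intro k
  set S : ℝ := ∑ i, M i k * a i with hS
  rcases Nat.eq_zero_or_pos N with hN | hN
  · subst hN
    simp [hS, Real.zero_rpow (by linarith [hf.2] : (1:ℝ) - f ≠ 0)]
  have : Nonempty (Fin N) := ⟨⟨0, hN⟩⟩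
  have hSpos : 0 < S := Finset.sum_pos (fun i _ => mul_pos (hM i k) (ha i)) Finset.univ_nonempty
  have h1 : ∑ i, a i * M i k * b k = b k * S := by
    rw [Finset.mul_sum]; apply Finset.sum_congr rfl; intro i _; ring
  rw [h1, hbfix k, Real.div_rpow (hβ k).le hSpos.le, div_mul_eq_mul_div,
    Real.rpow_sub hSpos, Real.rpow_one, mul_div_assoc]
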